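/- arXiv:1312.6297 — 2 statements merged into one kernel-verified Lean document; each statement's English description precedes it below -/
import Mathlib

section
/- Let I ⊆ J ⊆ ℝ be intervals containing 1 as an interior point, and let K : J → ℝ be not identically zero, Lebesgue measurable on I, and multiplicative on J (K(xy) = K(x)K(y) whenever x, y, xy ∈ J). Then either K ≡ 1 on J, or there exists α ∈ ℝ such that for all x ∈ J, either K(x) = |x|^α (with K(0)=0 if 0 ∈ J), or K(x) = sgn(x)|x|^α (with K(0)=0 if 0 ∈ J). -/
/-!
Near `0`, `g u = log (K (exp u))` is defined (`K (e^u) = K (e^(u/2))² > 0` because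
`K (e^(u/2)) * K (e^(-u/2)) = K 1 = 1`) and satisfies Cauchy's equation. The functions
`n * g (x / n)` are eventually constant in `n`; their limit extends `g` to a measurable additive
map `ℝ → ℝ`, which is continuous by Steinhaus' theorem and hence linear, so
`K (e^u) = e^(αu)` near `0`. Multiplying by `e^u` in small steps inside the interval `J` gives
`K (x * q) = K x * q ^ α` for `q > 0`: thus `K x = x ^ α` for `x > 0`, and `K x = c * |x| ^ α`
for `x < 0`, where `c² = 1` comes from `K (w * w) = K w ^ 2`. Finally `K 0 = K 0 * K x`, so
either `K 0 = 0` or `K ≡ 1`.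
-/

noncomputable def phi (α : ℝ) (x : ℝ) : ℝ := if x = 0 then 0 else |x| ^ α

noncomputable def psi (α : ℝ) (x : ℝ) : ℝ :=
  if x = 0 then 0 else Real.sign x * |x| ^ α

open Real Set Filter Topology Metric

def AdditiveOn (g : ℝ → ℝ) (S : Set ℝ) : Prop :=
  ∀ s ∈ S, ∀ t ∈ S, s + t ∈ S → g (s + t) = g s + g t

noncomputable def additiveExtension (g : ℝ → ℝ) (x : ℝ) : ℝ :=
  limUnder atTop fun n : ℕ => n * g (x / n)

lemma exists_nat_abs_div_lt {δ : ℝ} (hδ : 0 < δ) (x : ℝ) :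
    ∃ n : ℕ, n ≠ 0 ∧ |x / n| < δ := by
  obtain ⟨n, hn⟩ := exists_nat_gt (|x| / δ)
  have hn0 : (0 : ℝ) < n := (div_nonneg (abs_nonneg x) hδ.le).trans_lt hn
  refine ⟨n, by exact_mod_cast hn0.ne', ?_⟩
  rw [abs_div, Nat.abs_cast, div_lt_iff₀ hn0, mul_comm]
  exact (div_lt_iff₀ hδ).1 hn

namespace AdditiveOn

variable {g : ℝ → ℝ} {δ : ℝ}

lemma apply_nat_mul (hg : AdditiveOn g (ball 0 δ)) (n : ℕ) {t : ℝ} (ht : |n * t| < δ) :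
    g (n * t) = n * g t := by
  induction n with
  | zero =>
    have h0 : (0 : ℝ) ∈ ball 0 δ := by simpa using ht
    simpa using hg 0 h0 0 h0 (by simpa using h0)
  | succ n ih =>
    have hn : |n * t| ≤ |(n + 1 : ℕ) * t| := by
      rw [abs_mul, abs_mul]; gcongr; simp
    have ht' : |t| ≤ |(n + 1 : ℕ) * t| := by
      rw [abs_mul, Nat.abs_cast]
      exact le_mul_of_one_le_left (abs_nonneg t) (by exact_mod_cast Nat.le_add_left 1 n)
    have hsplit : ((n + 1 : ℕ) : ℝ) * t = n * t + t := by push_cast; ring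
    simp only [AdditiveOn, mem_ball_zero_iff, Real.norm_eq_abs] at hg
    rw [hsplit, hg _ (hn.trans_lt ht) _ (ht'.trans_lt ht) (hsplit ▸ ht), ih (hn.trans_lt ht)]
    push_cast; ring

lemma nat_mul_apply_div (hg : AdditiveOn g (ball 0 δ)) {n : ℕ} (hn : n ≠ 0) {x : ℝ}
    (hx : |x| < δ) : n * g (x / n) = g x := by
  have hxn : (n : ℝ) * (x / n) = x := mul_div_cancel₀ x (Nat.cast_ne_zero.2 hn)
  rw [← hg.apply_nat_mul n (hxn.symm ▸ hx), hxn]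

lemma nat_mul_apply_div_eq (hg : AdditiveOn g (ball 0 δ)) {m n : ℕ} (hm : m ≠ 0) (hn : n ≠ 0)
    {x : ℝ} (hxm : |x / m| < δ) (hxn : |x / n| < δ) : m * g (x / m) = n * g (x / n) := by
  have key : ∀ {a b : ℕ}, b ≠ 0 → |x / a| < δ →
      a * g (x / a) = (a * b : ℕ) * g (x / (a * b : ℕ)) := by
    intro a b hb hxa
    rw [← hg.nat_mul_apply_div hb hxa, div_div]
    push_cast; ring
  rw [key hn hxm, key hm hxn, mul_comm m n]

lemma tendsto_nat_mul_apply_div (hg : AdditiveOn g (ball 0 δ)) {n : ℕ} (hn : n ≠ 0) {x : ℝ}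
    (hx : |x / n| < δ) : Tendsto (fun m : ℕ => m * g (x / m)) atTop (𝓝 (n * g (x / n))) := by
  refine tendsto_atTop_of_eventually_const fun m (hm : n ≤ m) => ?_
  have hm0 : m ≠ 0 := by omega
  refine hg.nat_mul_apply_div_eq hm0 hn (lt_of_le_of_lt ?_ hx) hx
  rw [abs_div, abs_div, Nat.abs_cast, Nat.abs_cast]
  gcongr

lemma additiveExtension_eq (hg : AdditiveOn g (ball 0 δ)) {n : ℕ} (hn : n ≠ 0) {x : ℝ}
    (hx : |x / n| < δ) : additiveExtension g x = n * g (x / n) :=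
  (hg.tendsto_nat_mul_apply_div hn hx).limUnder_eq

lemma additiveExtension_add (hg : AdditiveOn g (ball 0 δ)) (hδ : 0 < δ) (x y : ℝ) :
    additiveExtension g (x + y) = additiveExtension g x + additiveExtension g y := by
  obtain ⟨n, hn, hxy⟩ := exists_nat_abs_div_lt hδ (|x| + |y|)
  have hn0 : (0 : ℝ) < n := by exact_mod_cast Nat.pos_of_ne_zero hn
  have hle : ∀ z, |z| ≤ |x| + |y| → |z / n| < δ := fun z hz => by
    refine lt_of_le_of_lt ?_ hxy
    rw [abs_div, abs_div, Nat.abs_cast, abs_of_nonneg (by positivity : 0 ≤ |x| + |y|)]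
    gcongr
  have hx := hle x (le_add_of_nonneg_right (abs_nonneg y))
  have hy := hle y (le_add_of_nonneg_left (abs_nonneg x))
  have hsum := hle (x + y) (abs_add_le x y)
  rw [hg.additiveExtension_eq hn hx, hg.additiveExtension_eq hn hy, hg.additiveExtension_eq hn hsum,
    add_div, hg (x / n) (mem_ball_zero_iff.2 hx) (y / n) (mem_ball_zero_iff.2 hy)
      (mem_ball_zero_iff.2 (by rwa [← add_div]))]
  ring

lemma additiveExtension_eq_self (hg : AdditiveOn g (ball 0 δ)) {x : ℝ} (hx : x ∈ ball 0 δ) :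
    additiveExtension g x = g x := by
  simpa using hg.additiveExtension_eq one_ne_zero (x := x) (by simpa using hx)

lemma measurable_additiveExtension (hg : AdditiveOn g (ball 0 δ)) (hδ : 0 < δ)
    (hmeas : Measurable g) : Measurable (additiveExtension g) := by
  refine measurable_of_tendsto_metrizable (f := fun (m : ℕ) x => m * g (x / m)) (by fun_prop)
    (tendsto_pi_nhds.2 fun x => ?_)
  obtain ⟨n, hn, hx⟩ := exists_nat_abs_div_lt hδ x
  rw [hg.additiveExtension_eq hn hx]
  exact hg.tendsto_nat_mul_apply_div hn hx

theorem exists_eq_mul (hg : AdditiveOn g (ball 0 δ))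
    (hmeas : Measurable ((ball 0 δ).domRestrict g)) :
    ∃ α : ℝ, ∀ t ∈ ball 0 δ, g t = α * t := by
  rcases le_or_gt δ 0 with hδ | hδ
  · simp [ball_eq_empty.2 hδ]
  set g' := (ball (0 : ℝ) δ).indicator g
  have hg' : AdditiveOn g' (ball 0 δ) := fun s hs t ht hst => by
    simp only [g', indicator_of_mem hs, indicator_of_mem ht, indicator_of_mem hst, hg s hs t ht hst]
  have hmeas' : Measurable g' :=
    measurable_of_restrict_of_restrict_compl measurableSet_ball
      (by convert hmeas using 1; ext x; exact indicator_of_mem x.2 g)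
      (by convert measurable_const (a := (0 : ℝ)) using 1; ext x; exact indicator_of_notMem x.2 g)
  let G : ℝ →+ ℝ := AddMonoidHom.mk' (additiveExtension g') (hg'.additiveExtension_add hδ)
  have hG : Continuous G := MeasureTheory.Measure.AddMonoidHom.continuous_of_measurable G
    (hg'.measurable_additiveExtension hδ hmeas')
  refine ⟨G 1, fun t ht => ?_⟩
  calc g t = G (t • 1) := by
        simp [G, hg'.additiveExtension_eq_self ht, g', indicator_of_mem ht]
    _ = G 1 * t := by rw [map_real_smul G hG, smul_eq_mul, mul_comm]

end AdditiveOn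

lemma mul_exp_mem_uIcc (x : ℝ) {u w : ℝ} (hw : w ∈ uIcc 0 u) :
    x * exp w ∈ uIcc x (x * exp u) := by
  have h := exp_monotone.mapsTo_uIcc hw
  rw [exp_zero] at h
  simpa [image_const_mul_uIcc] using mem_image_of_mem (x * ·) h

def MultiplicativeOn (K : ℝ → ℝ) (J : Set ℝ) : Prop :=
  ∀ x ∈ J, ∀ y ∈ J, x * y ∈ J → K (x * y) = K x * K y

namespace MultiplicativeOn

variable {K : ℝ → ℝ} {I J : Set ℝ} {α δ : ℝ}

lemma apply_one (hK : MultiplicativeOn K J) (h1 : 1 ∈ J) (hnz : ∃ x ∈ J, K x ≠ 0) :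
    K 1 = 1 := by
  obtain ⟨x, hx, hKx⟩ := hnz
  have h := hK x hx 1 h1 (by rwa [mul_one])
  rw [mul_one, eq_comm, mul_eq_left₀ hKx] at h
  exact h

lemma eq_one_of_apply_zero_ne_zero (hK : MultiplicativeOn K J) (h0 : 0 ∈ J) (hK0 : K 0 ≠ 0) :
    ∀ x ∈ J, K x = 1 := fun x hx => by
  have h := hK 0 h0 x hx (by rwa [zero_mul])
  rw [zero_mul, eq_comm, mul_eq_left₀ hK0] at h
  exact h

lemma apply_mul_self_pos (hK : MultiplicativeOn K J) (h1 : 1 ∈ J) (hK1 : K 1 = 1) {y : ℝ}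
    (hy0 : y ≠ 0) (hy : y ∈ J) (hyinv : y⁻¹ ∈ J) (hyy : y * y ∈ J) : 0 < K (y * y) := by
  have hinv : K y * K y⁻¹ = 1 := by
    rw [← hK y hy y⁻¹ hyinv (by rwa [mul_inv_cancel₀ hy0]), mul_inv_cancel₀ hy0, hK1]
  rw [hK y hy y hy hyy]
  exact mul_self_pos.2 (left_ne_zero_of_mul_eq_one hinv)

lemma additiveOn_log_comp_exp (hK : MultiplicativeOn K J) {S : Set ℝ} (hS : MapsTo exp S J)
    (hpos : ∀ u ∈ S, 0 < K (exp u)) : AdditiveOn (fun u => log (K (exp u))) S :=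
  fun s hs t ht hst => by
    simp only [exp_add]
    rw [hK _ (hS hs) _ (hS ht) (exp_add s t ▸ hS hst),
      log_mul (hpos s hs).ne' (hpos t ht).ne']

lemma exists_apply_exp_eq (hK : MultiplicativeOn K J) (hIJ : I ⊆ J) (h1I : 1 ∈ interior I)
    (hmeas : Measurable (I.domRestrict K)) (hK1 : K 1 = 1) :
    ∃ δ > 0, ∃ α : ℝ,
      MapsTo exp (ball 0 δ) J ∧ ∀ u ∈ ball 0 δ, K (exp u) = exp (α * u) := by
  obtain ⟨δ, hδ, hball⟩ : ∃ δ > 0, ball 0 δ ⊆ exp ⁻¹' I :=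
    Metric.mem_nhds_iff.1 <| continuous_exp.continuousAt.preimage_mem_nhds <| by
      rw [exp_zero]; exact mem_interior_iff_mem_nhds.1 h1I
  have hJ : MapsTo exp (ball 0 δ) J := fun u hu => hIJ (hball hu)
  have hpos : ∀ u ∈ ball 0 δ, 0 < K (exp u) := fun u hu => by
    have hhalf : ∀ v, |v| = |u| / 2 → v ∈ ball 0 δ := fun v hv => by
      rw [mem_ball_zero_iff, Real.norm_eq_abs, hv]
      rw [mem_ball_zero_iff, Real.norm_eq_abs] at hu
      linarith [abs_nonneg u]
    have hsq : exp (u / 2) * exp (u / 2) = exp u := by rw [← exp_add, add_halves]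
    rw [← hsq]
    refine hK.apply_mul_self_pos (hIJ (interior_subset h1I)) hK1 (exp_ne_zero _)
      (hJ (hhalf _ ?_)) (exp_neg (u / 2) ▸ hJ (hhalf _ ?_)) (hsq ▸ hJ hu)
    · simp [abs_div]
    · simp [abs_div]
  have hmeas' : Measurable ((ball 0 δ).domRestrict fun u => log (K (exp u))) :=
    measurable_log.comp <|
      hmeas.comp (f := fun u : ball (0 : ℝ) δ => (⟨exp u, hball u.2⟩ : I)) <|
        (measurable_exp.comp measurable_subtype_coe).subtype_mk
  obtain ⟨α, hα⟩ := (hK.additiveOn_log_comp_exp hJ hpos).exists_eq_mul hmeas'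
  refine ⟨δ, hδ, α, hJ, fun u hu => ?_⟩
  rw [← hα u hu, exp_log (hpos u hu)]

lemma apply_mul_exp_of_abs_lt (hK : MultiplicativeOn K J) (hJ : J.OrdConnected)
    (hexpJ : MapsTo exp (ball 0 δ) J) (hexp : ∀ u ∈ ball 0 δ, K (exp u) = exp (α * u))
    {x : ℝ} (hx : x ∈ J) (n : ℕ) :
    ∀ u, |u| < (n + 1) * δ → x * exp u ∈ J → K (x * exp u) = K x * exp (α * u) := by
  induction n with
  | zero =>
    intro u hu hxu
    have hu' : u ∈ ball 0 δ := by simpa using hu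
    rw [hK x hx _ (hexpJ hu') hxu, hexp u hu']
  | succ n ih =>
    intro u hu hxu
    set v := u / (n + 2)
    have huv : u = (n + 2) * v := by simp only [v]; field_simp
    have hv : v ∈ ball 0 δ := by
      rw [mem_ball_zero_iff, Real.norm_eq_abs]
      rw [huv, abs_mul, abs_of_pos (by positivity : (0 : ℝ) < n + 2)] at hu
      push_cast at hu
      nlinarith [abs_nonneg v]
    have hu' : |u - v| < (n + 1) * δ := by
      rw [mem_ball_zero_iff, Real.norm_eq_abs] at hv
      rw [huv, show (n + 2) * v - v = (n + 1) * v by ring, abs_mul,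
        abs_of_pos (by positivity : (0 : ℝ) < n + 1)]
      gcongr
    have hmem : x * exp (u - v) ∈ J := by
      refine hJ.uIcc_subset hx hxu (mul_exp_mem_uIcc x ?_)
      rw [huv, show (n + 2) * v - v = (n + 1) * v by ring]
      rcases le_total 0 v with h | h
      · exact mem_uIcc.2 (Or.inl ⟨by positivity, by nlinarith⟩)
      · exact mem_uIcc.2 (Or.inr ⟨by nlinarith, by nlinarith⟩)
    have hsplit : x * exp u = x * exp (u - v) * exp v := by
      rw [mul_assoc, ← exp_add, sub_add_cancel]
    rw [hsplit, hK _ hmem _ (hexpJ hv) (hsplit ▸ hxu), ih _ hu' hmem, hexp v hv, mul_assoc,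
      ← exp_add, ← mul_add, sub_add_cancel]

lemma apply_mul_exp (hK : MultiplicativeOn K J) (hJ : J.OrdConnected) (hδ : 0 < δ)
    (hexpJ : MapsTo exp (ball 0 δ) J) (hexp : ∀ u ∈ ball 0 δ, K (exp u) = exp (α * u))
    {x : ℝ} (hx : x ∈ J) {u : ℝ} (hxu : x * exp u ∈ J) :
    K (x * exp u) = K x * exp (α * u) := by
  obtain ⟨n, hn⟩ := exists_nat_gt (|u| / δ)
  rw [div_lt_iff₀ hδ] at hn
  exact hK.apply_mul_exp_of_abs_lt hJ hexpJ hexp hx n u (by nlinarith) hxu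

lemma apply_mul_rpow (hK : MultiplicativeOn K J) (hJ : J.OrdConnected) (hδ : 0 < δ)
    (hexpJ : MapsTo exp (ball 0 δ) J) (hexp : ∀ u ∈ ball 0 δ, K (exp u) = exp (α * u)) :
    ∀ x ∈ J, ∀ q, 0 < q → x * q ∈ J → K (x * q) = K x * q ^ α := by
  intro x hx q hq hxq
  have h := hK.apply_mul_exp hJ hδ hexpJ hexp hx (u := log q) (by rwa [exp_log hq])
  rwa [exp_log hq, mul_comm α, ← rpow_def_of_pos hq] at h

lemma exists_apply_neg_eq (hK : MultiplicativeOn K J) (hJ : J.OrdConnected) (h1 : 1 ∈ J)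
    (hpos : ∀ x ∈ J, 0 < x → K x = x ^ α)
    (hscale : ∀ x ∈ J, ∀ q, 0 < q → x * q ∈ J → K (x * q) = K x * q ^ α) :
    ∃ c : ℝ, (c = 1 ∨ c = -1) ∧ ∀ x ∈ J, x < 0 → K x = c * |x| ^ α := by
  by_cases hneg : ∃ s ∈ J, s < 0
  swap
  · exact ⟨1, Or.inl rfl, fun x hx hx0 => absurd ⟨x, hx, hx0⟩ hneg⟩
  obtain ⟨s, hs, hs0⟩ := hneg
  -- `w ∈ [-1, 0)` so that both `w` and `w * w` lie in `[s, 1] ⊆ J`.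
  set w := max s (-1)
  have hw0 : w < 0 := max_lt hs0 (by norm_num)
  have hws : s ≤ w := le_max_left s (-1)
  have hw1 : -1 ≤ w := le_max_right s (-1)
  have hw : w ∈ J := hJ.uIcc_subset hs h1 (mem_uIcc.2 (Or.inl ⟨hws, by linarith⟩))
  have hww : w * w ∈ J :=
    hJ.uIcc_subset hs h1 (mem_uIcc.2 (Or.inl ⟨by nlinarith, by nlinarith⟩))
  have hwα : 0 < |w| ^ α := rpow_pos_of_pos (abs_pos.2 hw0.ne) α
  set c := K w / |w| ^ α
  have hneg : ∀ x ∈ J, x < 0 → K x = c * |x| ^ α := fun x hx hx0 => by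
    have hq : 0 < x / w := div_pos_of_neg_of_neg hx0 hw0
    have h := hscale w hw (x / w) hq (by rwa [mul_div_cancel₀ _ hw0.ne])
    rw [mul_div_cancel₀ _ hw0.ne] at h
    rw [h, ← abs_of_pos hq, abs_div, div_rpow (abs_nonneg x) (abs_nonneg w)]
    simp only [c]
    ring
  have hc : c * c = 1 := by
    have h := hK w hw w hw hww
    rw [hpos _ hww (mul_self_pos.2 hw0.ne), hneg w hw hw0, ← abs_mul_abs_self w,
      mul_rpow (abs_nonneg w) (abs_nonneg w)] at h
    exact mul_right_cancel₀ (mul_pos hwα hwα).ne' (by linear_combination -h)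
  exact ⟨c, mul_self_eq_one_iff.1 hc, hneg⟩

end MultiplicativeOn

lemma forall_eq_phi_or_forall_eq_psi {K : ℝ → ℝ} {J : Set ℝ} {α c : ℝ}
    (hc : c = 1 ∨ c = -1)
    (h0 : 0 ∈ J → K 0 = 0) (hpos : ∀ x ∈ J, 0 < x → K x = x ^ α)
    (hneg : ∀ x ∈ J, x < 0 → K x = c * |x| ^ α) :
    (∀ x ∈ J, K x = phi α x) ∨ (∀ x ∈ J, K x = psi α x) := by
  rcases hc with rfl | rfl
  · refine Or.inl fun x hx => ?_
    rcases lt_trichotomy x 0 with hx0 | rfl | hx0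
    · simp [phi, hneg x hx hx0, hx0.ne]
    · simp [phi, h0 hx]
    · simp [phi, hpos x hx hx0, hx0.ne', abs_of_pos hx0]
  · refine Or.inr fun x hx => ?_
    rcases lt_trichotomy x 0 with hx0 | rfl | hx0
    · simp [psi, hneg x hx hx0, hx0.ne, Real.sign_of_neg hx0]
    · simp [psi, h0 hx]
    · simp [psi, hpos x hx hx0, hx0.ne', abs_of_pos hx0, Real.sign_of_pos hx0]

theorem multiplicative_locally_measurable_classification_general
    (I J : Set ℝ) (hIJ : I ⊆ J) (hJconv : Convex ℝ J)
    (h1I : (1 : ℝ) ∈ interior I)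
    (K : ℝ → ℝ)
    (hnz : ¬ (∀ x ∈ J, K x = 0))
    (hmeas : Measurable (I.restrict K))
    (hmult : ∀ x ∈ J, ∀ y ∈ J, x * y ∈ J → K (x * y) = K x * K y) :
    (∀ x ∈ J, K x = 1) ∨
      ∃ α : ℝ, (∀ x ∈ J, K x = phi α x) ∨ (∀ x ∈ J, K x = psi α x) := by
  have hK : MultiplicativeOn K J := hmult
  have h1J : (1 : ℝ) ∈ J := hIJ (interior_subset h1I)
  have hJ : J.OrdConnected := hJconv.ordConnected
  by_cases h0 : 0 ∈ J ∧ K 0 ≠ 0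
  · exact Or.inl (hK.eq_one_of_apply_zero_ne_zero h0.1 h0.2)
  have hK1 : K 1 = 1 := hK.apply_one h1J (by simpa using hnz)
  obtain ⟨δ, hδ, α, hexpJ, hexp⟩ := hK.exists_apply_exp_eq hIJ h1I hmeas hK1
  have hscale := hK.apply_mul_rpow hJ hδ hexpJ hexp
  have hpos : ∀ x ∈ J, 0 < x → K x = x ^ α := fun x hx hx0 => by
    simpa [hK1] using hscale 1 h1J x hx0 (by rwa [one_mul])
  obtain ⟨c, hc, hneg⟩ := hK.exists_apply_neg_eq hJ h1J hpos hscale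
  have hK0 : 0 ∈ J → K 0 = 0 := fun h0J => not_not.1 fun hK0 => h0 ⟨h0J, hK0⟩
  exact Or.inr ⟨α, forall_eq_phi_or_forall_eq_psi hc hK0 hpos hneg⟩

theorem multiplicative_locally_measurable_classification
    (I J : Set ℝ) (hIJ : I ⊆ J) (hIconv : Convex ℝ I) (hJconv : Convex ℝ J)
    (h1I : (1 : ℝ) ∈ interior I)
    (K : ℝ → ℝ)
    (hnz : ¬ (∀ x ∈ J, K x = 0))
    (hmeas : Measurable (I.restrict K))
    (hmult : ∀ x ∈ J, ∀ y ∈ J, x * y ∈ J → K (x * y) = K x * K y) :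
    (∀ x ∈ J, K x = 1) ∨
      ∃ α : ℝ, (∀ x ∈ J, K x = phi α x) ∨ (∀ x ∈ J, K x = psi α x) :=
  multiplicative_locally_measurable_classification_general I J hIJ hJconv h1I K hnz hmeas hmult
end

section
/- Let I ⊆ J ⊆ (0,∞) be intervals containing 1 as an interior point. If K : J → ℝ is Lebesgue measurable on I and satisfies K(xy) = K(x) + K(y) whenever x, y, xy ∈ J, then there exists β ∈ ℝ such that K(x) = β·ln(x) for all x ∈ J. -/
/-!
Taking logarithms turns the equation into Cauchy's equation `F (s + t) = F s + F t` for
`F = K ∘ exp`, imposed only when `s`, `t` and `s + t` lie in the interval `exp ⁻¹' J`.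
On a convex set containing `0` such an `F` satisfies `F t = n • F (t / n)`, so choosing `n`
so large that `t / n` falls into a fixed interval `[-δ, δ]` on which `F` is measurable gives an
additive map `G : ℝ → ℝ` extending `F`. It is measurable, hence continuous, hence linear.
-/

open Set

def IsAdditiveOn {M : Type*} [Add M] (F : ℝ → M) (L : Set ℝ) : Prop :=
  ∀ s ∈ L, ∀ t ∈ L, s + t ∈ L → F (s + t) = F s + F t

theorem div_natCast_mem_Icc_of_abs_le {t δ : ℝ} {n : ℕ} (hn : n ≠ 0) (h : |t| ≤ n * δ) :
    t / n ∈ Icc (-δ) δ := by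
  have hn' : (0 : ℝ) < n := Nat.cast_pos.2 (Nat.pos_of_ne_zero hn)
  rw [mem_Icc, ← abs_le, abs_div, Nat.abs_cast, div_le_iff₀ hn', mul_comm]
  exact h

theorem abs_le_ceil_succ_mul {δ : ℝ} (hδ : 0 < δ) (t : ℝ) :
    |t| ≤ ((⌈|t| / δ⌉₊ + 1 : ℕ) : ℝ) * δ := by
  rw [← div_le_iff₀ hδ]
  push_cast
  linarith [Nat.le_ceil (|t| / δ)]

namespace IsAdditiveOn

variable {M : Type*} [AddCommGroup M] {F : ℝ → M} {L : Set ℝ}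

theorem mono {L' : Set ℝ} (hF : IsAdditiveOn F L) (h : L' ⊆ L) : IsAdditiveOn F L' :=
  fun s hs t ht hst => hF s (h hs) t (h ht) (h hst)

theorem map_zero (hF : IsAdditiveOn F L) (h0 : (0 : ℝ) ∈ L) : F 0 = 0 := by
  simpa using hF 0 h0 0 h0 (by simpa using h0)

theorem map_natCast_mul (hF : IsAdditiveOn F L) (hL : Convex ℝ L) (h0 : (0 : ℝ) ∈ L) {u : ℝ}
    {n : ℕ} (hn : (n : ℝ) * u ∈ L) : F (n * u) = n • F u := by
  induction n with
  | zero => simpa using hF.map_zero h0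
  | succ n ih =>
    have hscale : ∀ c ∈ Icc (0 : ℝ) 1, c * ((n + 1 : ℕ) * u) ∈ L := fun c hc =>
      hL.smul_mem_of_zero_mem h0 hn hc
    have hpos : (0 : ℝ) < n + 1 := by positivity
    have hnu : (n : ℝ) * u ∈ L := by
      convert hscale (n / (n + 1)) ⟨by positivity, (div_le_one hpos).2 (by linarith)⟩ using 1
      push_cast; field_simp
    have hu : u ∈ L := by
      convert hscale (1 / (n + 1)) ⟨by positivity, (div_le_one hpos).2 (by linarith)⟩ using 1
      push_cast; field_simp
    rw [succ_nsmul, ← ih hnu, ← hF _ hnu _ hu (by convert hn using 1; push_cast; ring)]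
    push_cast; ring_nf

theorem eq_nsmul_div (hF : IsAdditiveOn F L) (hL : Convex ℝ L) (h0 : (0 : ℝ) ∈ L) {t : ℝ}
    (ht : t ∈ L) {n : ℕ} (hn : n ≠ 0) : F t = n • F (t / n) := by
  have hcancel : (n : ℝ) * (t / n) = t := mul_div_cancel₀ t (Nat.cast_ne_zero.2 hn)
  have := hF.map_natCast_mul hL h0 (u := t / n) (n := n) (by rwa [hcancel])
  rwa [hcancel] at this

end IsAdditiveOn

noncomputable def cauchyExtension {M : Type*} [AddCommGroup M] (F : ℝ → M) (δ t : ℝ) : M :=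
  (⌈|t| / δ⌉₊ + 1) • F (t / (⌈|t| / δ⌉₊ + 1 : ℕ))

section cauchyExtension

variable {M : Type*} [AddCommGroup M] {F : ℝ → M} {δ : ℝ}

theorem cauchyExtension_eq_nsmul_div (hF : IsAdditiveOn F (Icc (-δ) δ)) (hδ : 0 < δ) {t : ℝ}
    {n : ℕ} (hn : n ≠ 0) (ht : |t| ≤ n * δ) : cauchyExtension F δ t = n • F (t / n) := by
  set N := ⌈|t| / δ⌉₊ + 1
  have hN : N ≠ 0 := Nat.succ_ne_zero _
  have hIcc : Convex ℝ (Icc (-δ) δ) := convex_Icc _ _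
  have h0 : (0 : ℝ) ∈ Icc (-δ) δ := ⟨by linarith, hδ.le⟩
  have hNn := hF.eq_nsmul_div hIcc h0 (div_natCast_mem_Icc_of_abs_le hN
    (abs_le_ceil_succ_mul hδ t)) hn
  have hnN := hF.eq_nsmul_div hIcc h0 (div_natCast_mem_Icc_of_abs_le hn ht) hN
  rw [cauchyExtension, hNn, hnN, div_right_comm, smul_comm]

theorem cauchyExtension_add (hF : IsAdditiveOn F (Icc (-δ) δ)) (hδ : 0 < δ) (s t : ℝ) :
    cauchyExtension F δ (s + t) = cauchyExtension F δ s + cauchyExtension F δ t := by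
  set n := ⌈(|s| + |t|) / δ⌉₊ + 1
  have hn : n ≠ 0 := Nat.succ_ne_zero _
  have hst : |s| + |t| ≤ n * δ := by
    have := abs_le_ceil_succ_mul hδ (|s| + |t|)
    rwa [abs_of_nonneg (add_nonneg (abs_nonneg s) (abs_nonneg t))] at this
  have hs : |s| ≤ n * δ := by linarith [abs_nonneg t]
  have ht : |t| ≤ n * δ := by linarith [abs_nonneg s]
  have hsum : |s + t| ≤ n * δ := (abs_add_le s t).trans hst
  rw [cauchyExtension_eq_nsmul_div hF hδ hn hs, cauchyExtension_eq_nsmul_div hF hδ hn ht,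
    cauchyExtension_eq_nsmul_div hF hδ hn hsum, add_div,
    hF _ (div_natCast_mem_Icc_of_abs_le hn hs) _ (div_natCast_mem_Icc_of_abs_le hn ht)
      (add_div s t n ▸ div_natCast_mem_Icc_of_abs_le hn hsum), smul_add]

theorem cauchyExtension_eq_of_mem {L : Set ℝ} (hF : IsAdditiveOn F L) (hL : Convex ℝ L)
    (h0 : (0 : ℝ) ∈ L) {t : ℝ} (ht : t ∈ L) : cauchyExtension F δ t = F t :=
  (hF.eq_nsmul_div hL h0 ht (Nat.succ_ne_zero _)).symm

end cauchyExtension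

theorem measurable_cauchyExtension {F : ℝ → ℝ} {δ : ℝ} (hδ : 0 < δ)
    (hF : Measurable ((Icc (-δ) δ).domRestrict F)) : Measurable (cauchyExtension F δ) := by
  have hext : cauchyExtension F δ = fun t => ((⌈|t| / δ⌉₊ + 1 : ℕ) : ℝ) *
      (Icc (-δ) δ).domRestrict F ⟨t / (⌈|t| / δ⌉₊ + 1 : ℕ),
        div_natCast_mem_Icc_of_abs_le (Nat.succ_ne_zero _) (abs_le_ceil_succ_mul hδ t)⟩ := by
    funext t
    rw [cauchyExtension, nsmul_eq_mul]
    rfl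
  have hceil : Measurable fun t : ℝ => ((⌈|t| / δ⌉₊ + 1 : ℕ) : ℝ) := by fun_prop
  rw [hext]
  exact hceil.mul (hF.comp ((measurable_id.div hceil).subtype_mk))

theorem IsAdditiveOn.exists_eq_mul_of_measurable {F : ℝ → ℝ} {L U : Set ℝ}
    (hF : IsAdditiveOn F L) (hL : Convex ℝ L) (hUL : U ⊆ L) (hU : (0 : ℝ) ∈ interior U)
    (hmeas : Measurable (U.domRestrict F)) : ∃ β : ℝ, ∀ t ∈ L, F t = β * t := by
  obtain ⟨δ, hδ, hδU⟩ : ∃ δ > 0, Icc (-δ) δ ⊆ U := by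
    obtain ⟨ε, hε, hball⟩ := Metric.mem_nhds_iff.1 (mem_interior_iff_mem_nhds.1 hU)
    refine ⟨ε / 2, half_pos hε, fun t ht => hball ?_⟩
    rw [Real.ball_eq_Ioo]
    exact ⟨by linarith [ht.1], by linarith [ht.2]⟩
  let G : ℝ →+ ℝ := AddMonoidHom.mk' (cauchyExtension F δ)
    (cauchyExtension_add (hF.mono (hδU.trans hUL)) hδ)
  have hG : Continuous G := MeasureTheory.Measure.AddMonoidHom.continuous_of_measurable G
    (measurable_cauchyExtension hδ (hmeas.comp (measurable_inclusion hδU)))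
  refine ⟨G 1, fun t ht => ?_⟩
  calc F t = G (t • 1) := by
        rw [smul_eq_mul, mul_one]
        exact (cauchyExtension_eq_of_mem hF hL (hUL (interior_subset hU)) ht).symm
    _ = G 1 * t := by rw [map_real_smul G hG, smul_eq_mul, mul_comm]

theorem logarithmic_cauchy_locally_measurable_general
    (I J : Set ℝ) (hIJ : I ⊆ J) (hJpos : J ⊆ Set.Ioi (0 : ℝ))
    (hJconv : Convex ℝ J)
    (h1I : (1 : ℝ) ∈ interior I)
    (K : ℝ → ℝ)
    (hmeas : Measurable (I.restrict K))
    (heq : ∀ x ∈ J, ∀ y ∈ J, x * y ∈ J → K (x * y) = K x + K y) :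
    ∃ β : ℝ, ∀ x ∈ J, K x = β * Real.log x := by
  have hadd : IsAdditiveOn (K ∘ Real.exp) (Real.exp ⁻¹' J) := fun s hs t ht hst => by
    rw [mem_preimage, Real.exp_add] at hst
    simpa only [Function.comp, Real.exp_add] using heq _ hs _ ht hst
  have hconv : Convex ℝ (Real.exp ⁻¹' J) :=
    (hJconv.ordConnected.preimage_mono Real.exp_monotone).convex
  have h0 : (0 : ℝ) ∈ interior (Real.exp ⁻¹' I) :=
    preimage_interior_subset_interior_preimage Real.continuous_exp
      (by rwa [mem_preimage, Real.exp_zero])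
  have hmeas' : Measurable ((Real.exp ⁻¹' I).domRestrict (K ∘ Real.exp)) :=
    hmeas.comp ((Real.measurable_exp.comp measurable_subtype_coe).subtype_mk (h := fun t => t.2))
  obtain ⟨β, hβ⟩ := hadd.exists_eq_mul_of_measurable hconv (preimage_mono hIJ) h0 hmeas'
  refine ⟨β, fun x hx => ?_⟩
  have hexp : Real.exp (Real.log x) = x := Real.exp_log (hJpos hx)
  simpa only [Function.comp, hexp] using hβ (Real.log x) (by rwa [mem_preimage, hexp])

theorem logarithmic_cauchy_locally_measurable
    (I J : Set ℝ) (hIJ : I ⊆ J) (hJpos : J ⊆ Set.Ioi (0 : ℝ))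
    (hIconv : Convex ℝ I) (hJconv : Convex ℝ J)
    (h1I : (1 : ℝ) ∈ interior I)
    (K : ℝ → ℝ)
    (hmeas : Measurable (I.restrict K))
    (heq : ∀ x ∈ J, ∀ y ∈ J, x * y ∈ J → K (x * y) = K x + K y) :
    ∃ β : ℝ, ∀ x ∈ J, K x = β * Real.log x :=
  logarithmic_cauchy_locally_measurable_general I J hIJ hJpos hJconv h1I K hmeas heq
end
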